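/- Let t ∈ [0,1) and N ∈ (1/2)ℤ. For real l ≥ max(|N|, 1), set u_l := ([l+N]·[l−N]·[2l])/(q·[2l+1]·[l]²) · (1 − t + q^{−2N}·[2l]^{−2}·[l]²·(t − 1 + q^{2N})²)/(1 − t) − 1. Then u_l ≤ C_N·q^{2l} for all such l, where C_N := (q^N − q^{−N}(1−t))² / ((1−q²)²·(1−t)). -/

import Mathlib

noncomputable section

namespace Podles

/-- The `q`-number `[x] = (q^x - q^(-x))/(q - q⁻¹)`. -/
def qn (q x : ℝ) : ℝ := (q ^ x - q ^ (-x)) / (q - q⁻¹)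

/-!
Write `F` for the first factor and `r = [l]² / [2l]²`. The left-hand side equals
`(F - 1) + F r K` with `K = (q^N - q^(-N)(1 - t))² / (1 - t) ≥ 0`, while the right-hand side is
`q^(2l) K / (1 - q²)²`. The identity `[l+N][l-N] = [l]² - [N]²` together with
`q [2l+1] = [2l] + q^(2l+1)` gives `F ≤ 1`, and the estimates
`q^(1-x) ≤ [x] ≤ q^(1-x) / (1 - q²)` (the lower one for `x ≥ 1`) give
`F r ≤ q^(2l) / (1 - q²)²`.
-/

section

variable {q : ℝ}

theorem qn_add_mul_qn_sub (hq : 0 < q) (a b : ℝ) :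
    qn q (a + b) * qn q (a - b) = qn q a ^ 2 - qn q b ^ 2 := by
  simp only [qn, div_mul_div_comm, div_pow, ← sub_div, ← sq]
  congr 1
  have hqa := (Real.rpow_pos_of_pos hq a).ne'
  have hqb := (Real.rpow_pos_of_pos hq b).ne'
  rw [Real.rpow_add hq, Real.rpow_sub hq, Real.rpow_neg hq.le, Real.rpow_neg hq.le,
    Real.rpow_neg hq.le, Real.rpow_neg hq.le, Real.rpow_add hq, Real.rpow_sub hq]
  field_simp
  ring

theorem one_sub_sq_mul_qn (hq0 : 0 < q) (hq1 : q < 1) (x : ℝ) :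
    (1 - q ^ 2) * qn q x = q ^ (1 - x) - q ^ (1 + x) := by
  have hq : q - q⁻¹ ≠ 0 := by
    have : 1 < q⁻¹ := (one_lt_inv₀ hq0).mpr hq1
    linarith
  rw [qn, mul_div_assoc', div_eq_iff hq, Real.rpow_sub hq0, Real.rpow_add hq0,
    Real.rpow_neg hq0.le, Real.rpow_one]
  field_simp
  ring

theorem qn_pos (hq0 : 0 < q) (hq1 : q < 1) {x : ℝ} (hx : 0 < x) : 0 < qn q x := by
  have h : 0 < (1 - q ^ 2) * qn q x := by
    rw [one_sub_sq_mul_qn hq0 hq1]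
    exact sub_pos.mpr (Real.rpow_lt_rpow_of_exponent_gt hq0 hq1 (by linarith))
  exact pos_of_mul_pos_right h (by nlinarith)

theorem one_sub_sq_mul_qn_le (hq0 : 0 < q) (hq1 : q < 1) (x : ℝ) :
    (1 - q ^ 2) * qn q x ≤ q ^ (1 - x) := by
  rw [one_sub_sq_mul_qn hq0 hq1]
  linarith [Real.rpow_pos_of_pos hq0 (1 + x)]

theorem rpow_le_qn (hq0 : 0 < q) (hq1 : q < 1) {x : ℝ} (hx : 1 ≤ x) :
    q ^ (1 - x) ≤ qn q x := by
  have h : q ^ (1 + x) ≤ q ^ 2 * q ^ (1 - x) := by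
    rw [← Real.rpow_natCast, ← Real.rpow_add hq0]
    exact Real.rpow_le_rpow_of_exponent_ge hq0 hq1.le (by push_cast; linarith)
  have h' : (1 - q ^ 2) * q ^ (1 - x) ≤ (1 - q ^ 2) * qn q x := by
    rw [one_sub_sq_mul_qn hq0 hq1]
    linarith
  exact le_of_mul_le_mul_left h' (by nlinarith)

theorem mul_qn_add_one (hq0 : 0 < q) (hq1 : q < 1) (x : ℝ) :
    q * qn q (x + 1) = qn q x + q ^ (x + 1) := by
  have h := one_sub_sq_mul_qn hq0 hq1
  have hq : 1 - q ^ 2 ≠ 0 := by nlinarith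
  apply mul_left_cancel₀ hq
  rw [mul_left_comm, mul_add, h, h, Real.rpow_add hq0, Real.rpow_sub hq0, Real.rpow_add hq0,
    Real.rpow_sub hq0, Real.rpow_add hq0, Real.rpow_one]
  field_simp
  ring

theorem qn_add_mul_qn_sub_mul_qn_two_mul_le (hq0 : 0 < q) (hq1 : q < 1) {l : ℝ} (hl : 0 < l)
    (N : ℝ) :
    qn q (l + N) * qn q (l - N) * qn q (2 * l) ≤ q * qn q (2 * l + 1) * qn q l ^ 2 := by
  have h2l : qn q (2 * l) ≤ q * qn q (2 * l + 1) := by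
    rw [mul_qn_add_one hq0 hq1]
    linarith [Real.rpow_pos_of_pos hq0 (2 * l + 1)]
  calc qn q (l + N) * qn q (l - N) * qn q (2 * l)
      ≤ qn q l ^ 2 * qn q (2 * l) := by
        rw [qn_add_mul_qn_sub hq0]
        exact mul_le_mul_of_nonneg_right (sub_le_self _ (sq_nonneg _))
          (qn_pos hq0 hq1 (by positivity)).le
    _ ≤ q * qn q (2 * l + 1) * qn q l ^ 2 := by
        rw [mul_comm]
        exact mul_le_mul_of_nonneg_right h2l (sq_nonneg _)

theorem qn_add_mul_qn_sub_mul_one_sub_sq_sq_le (hq0 : 0 < q) (hq1 : q < 1) {l : ℝ}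
    (hl : 1 / 2 ≤ l) (N : ℝ) :
    qn q (l + N) * qn q (l - N) * (1 - q ^ 2) ^ 2 ≤
      q ^ (2 * l) * (q * qn q (2 * l + 1) * qn q (2 * l)) := by
  have hq2 : 0 ≤ 1 - q ^ 2 := by nlinarith
  calc qn q (l + N) * qn q (l - N) * (1 - q ^ 2) ^ 2
      ≤ ((1 - q ^ 2) * qn q l) ^ 2 := by
        rw [qn_add_mul_qn_sub hq0, mul_pow, mul_comm]
        exact mul_le_mul_of_nonneg_left (sub_le_self _ (sq_nonneg _)) (sq_nonneg _)
    _ ≤ (q ^ (1 - l)) ^ 2 := by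
        gcongr
        · exact mul_nonneg hq2 (qn_pos hq0 hq1 (by linarith)).le
        · exact one_sub_sq_mul_qn_le hq0 hq1 l
    _ = q ^ (2 * l) * (q * q ^ (1 - (2 * l + 1)) * q ^ (1 - 2 * l)) := by
        rw [← Real.rpow_natCast, ← Real.rpow_mul hq0.le]
        nth_rewrite 3 [← Real.rpow_one q]
        rw [← Real.rpow_add hq0, ← Real.rpow_add hq0, ← Real.rpow_add hq0]
        ring_nf
    _ ≤ q ^ (2 * l) * (q * qn q (2 * l + 1) * qn q (2 * l)) := by
        gcongr
        · exact mul_nonneg hq0.le (qn_pos hq0 hq1 (by linarith)).le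
        · exact rpow_le_qn hq0 hq1 (by linarith)
        · exact rpow_le_qn hq0 hq1 (by linarith)

end

theorem statement4_general (q t : ℝ) (hq0 : 0 < q) (hq1 : q < 1) (ht1 : t < 1)
    (N : ℝ) :
    ∀ l : ℝ, max |N| 1 ≤ l →
      qn q (l + N) * qn q (l - N) * qn q (2 * l) / (q * qn q (2 * l + 1) * qn q l ^ 2) *
          ((1 - t + q ^ (-(2 * N)) * ((qn q (2 * l))⁻¹) ^ 2 * qn q l ^ 2 *
              (t - 1 + q ^ (2 * N)) ^ 2) / (1 - t)) - 1 ≤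
        (q ^ N - q ^ (-N) * (1 - t)) ^ 2 / ((1 - q ^ 2) ^ 2 * (1 - t)) * q ^ (2 * l) := by
  intro l hl
  have hl1 : 1 ≤ l := le_trans (le_max_right _ _) hl
  have hs : 0 < 1 - t := by linarith
  have hl0 := qn_pos hq0 hq1 (by linarith : 0 < l)
  have h2l0 := qn_pos hq0 hq1 (by linarith : 0 < 2 * l)
  have h2l10 := qn_pos hq0 hq1 (by linarith : 0 < 2 * l + 1)
  have hq2 : 0 < 1 - q ^ 2 := by nlinarith
  rw [Real.rpow_neg hq0.le, Real.rpow_neg hq0.le, mul_comm 2 N, Real.rpow_mul hq0.le,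
    Real.rpow_two]
  have hb := (Real.rpow_pos_of_pos hq0 N).ne'
  set b := q ^ N
  set F := qn q (l + N) * qn q (l - N) * qn q (2 * l) / (q * qn q (2 * l + 1) * qn q l ^ 2)
  have hF1 : F ≤ 1 :=
    (div_le_one (by positivity)).mpr (qn_add_mul_qn_sub_mul_qn_two_mul_le hq0 hq1 (by linarith) N)
  have hFr : F * (qn q l ^ 2 / qn q (2 * l) ^ 2) ≤ q ^ (2 * l) / (1 - q ^ 2) ^ 2 := by
    rw [show F * (qn q l ^ 2 / qn q (2 * l) ^ 2) =
        qn q (l + N) * qn q (l - N) / (q * qn q (2 * l + 1) * qn q (2 * l)) by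
          simp only [F]; field_simp, div_le_div_iff₀ (by positivity) (by positivity)]
    exact qn_add_mul_qn_sub_mul_one_sub_sq_sq_le hq0 hq1 (by linarith) N
  calc F * ((1 - t + (b ^ 2)⁻¹ * (qn q (2 * l))⁻¹ ^ 2 * qn q l ^ 2 * (t - 1 + b ^ 2) ^ 2) /
          (1 - t)) - 1
      = (F - 1) + F * (qn q l ^ 2 / qn q (2 * l) ^ 2) * ((b - b⁻¹ * (1 - t)) ^ 2 / (1 - t)) := by
        field_simp
        ring
    _ ≤ 0 + q ^ (2 * l) / (1 - q ^ 2) ^ 2 * ((b - b⁻¹ * (1 - t)) ^ 2 / (1 - t)) := by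
        gcongr
        linarith
    _ = (b - b⁻¹ * (1 - t)) ^ 2 / ((1 - q ^ 2) ^ 2 * (1 - t)) * q ^ (2 * l) := by
        field_simp
        ring

/-- the upper bound `u_l ≤ C_N q^{2l}`. -/
theorem statement4 (q t : ℝ) (hq0 : 0 < q) (hq1 : q < 1) (ht0 : 0 ≤ t) (ht1 : t < 1)
    (N : ℝ) (hN : ∃ n : ℤ, N = (n : ℝ) / 2) :
    ∀ l : ℝ, max |N| 1 ≤ l →
      qn q (l + N) * qn q (l - N) * qn q (2 * l) / (q * qn q (2 * l + 1) * qn q l ^ 2) *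
          ((1 - t + q ^ (-(2 * N)) * ((qn q (2 * l))⁻¹) ^ 2 * qn q l ^ 2 *
              (t - 1 + q ^ (2 * N)) ^ 2) / (1 - t)) - 1 ≤
        (q ^ N - q ^ (-N) * (1 - t)) ^ 2 / ((1 - q ^ 2) ^ 2 * (1 - t)) * q ^ (2 * l) :=
  statement4_general q t hq0 hq1 ht1 N

end Podles
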